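/- arXiv:1706.07386 — 3 statements merged into one kernel-verified Lean document; each statement's English description precedes it below -/
import Mathlib

section
/- Let ({\cal A}, I) be a weak ditalgebra ${\cal A} = (T_A(V), δ)$ with an ideal I of A such that either ${\cal A}$ is interlaced with I or δ(I) ⊆ IV + VI. Set I_V = IV + δ(I) + VI, an A-A-subbimodule of V. Then the ideal J of T generated by I and I_V satisfies δ(J) ⊆ J (so J is an ideal of the weak ditalgebra). In particular, J ∩ A = I and J ∩ V = I_V, and if δ(I) ⊆ IV + VI then I_V = IV + VI. -/
/-!
The ideal `J` is generated by `I` (degree 0) and `I_V` (degree 1), so by the graded Leibniz rule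
`δ(J) ⊆ J` as soon as `δ` maps `I` and `I_V` into `J`. Here `δ(I) ⊆ I_V` by construction,
`δ(I V)` and `δ(V I)` expand into terms with a factor from `I` or `δ(I)`, and `δ²(I) ⊆ J` by either
hypothesis: interlacing puts it in `T I T`, and otherwise `δ²(I) ⊆ δ(I V + V I)`.

The degree-`n` part of `J` is spanned by the products `𝒜 i * G * 𝒜 j` with `i + deg G + j = n`.
For `n = 0` only `A I A ⊆ I` occurs; for `n = 1` only `A I V`, `V I A` and `A I_V A`, which lie in
`I_V` because `I_V` is an `A`-bimodule (`a δ(x) = δ(a x) - δ(a) x`).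
-/

namespace Submodule

variable {R A : Type*} [CommSemiring R] [Semiring A] [Algebra R A]

theorem mul_mul_le_top_mul_mul_top (S X Y : Submodule R A) : X * S * Y ≤ ⊤ * S * ⊤ :=
  mul_le_mul' (mul_le_mul' le_top le_rfl) le_top

theorem le_top_mul_mul_top (S : Submodule R A) : S ≤ ⊤ * S * ⊤ := by
  simpa only [one_mul, mul_one] using mul_mul_le_top_mul_mul_top S 1 1

theorem mul_le_top_mul_mul_top {S Y : Submodule R A} (hY : Y ≤ ⊤ * S * ⊤) (X : Submodule R A) :
    X * Y ≤ ⊤ * S * ⊤ :=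
  calc X * Y ≤ ⊤ * (⊤ * S * ⊤) := mul_le_mul' le_top hY
    _ = ⊤ * ⊤ * S * ⊤ := by simp only [mul_assoc]
    _ ≤ ⊤ * S * ⊤ := mul_le_mul_left (mul_le_mul_left le_top S) ⊤

theorem le_top_mul_mul_top_mul {S Y : Submodule R A} (hY : Y ≤ ⊤ * S * ⊤) (X : Submodule R A) :
    Y * X ≤ ⊤ * S * ⊤ :=
  calc Y * X ≤ ⊤ * S * ⊤ * ⊤ := mul_le_mul' hY le_top
    _ = ⊤ * S * (⊤ * ⊤) := mul_assoc _ _ _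
    _ ≤ ⊤ * S * ⊤ := mul_le_mul_right le_top _

end Submodule

theorem iSupIndep.inf_le_of_le_sup_iSup_ne {ι α : Type*} [CompleteLattice α] [IsModularLattice α]
    {t : ι → α} (hind : iSupIndep t) {m n : α} {i : ι} (hm : m ≤ t i)
    (hn : n ≤ m ⊔ ⨆ (j) (_ : j ≠ i), t j) : n ⊓ t i ≤ m :=
  calc n ⊓ t i ≤ (m ⊔ ⨆ (j) (_ : j ≠ i), t j) ⊓ t i := inf_le_inf_right _ hn
    _ = m := by rw [sup_inf_assoc_of_le _ hm, (hind i).symm.eq_bot, sup_bot_eq]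

section Graded

variable {k T : Type*} [CommRing k] [Ring T] [Algebra k T] {𝒜 : ℕ → Submodule k T}

theorem mul_mul_le_of_le (hmul : ∀ i j : ℕ, 𝒜 i * 𝒜 j ≤ 𝒜 (i + j)) {G : Submodule k T} {d : ℕ}
    (hG : G ≤ 𝒜 d) (i j : ℕ) : 𝒜 i * G * 𝒜 j ≤ 𝒜 (i + d + j) :=
  (mul_le_mul_left ((mul_le_mul_right hG _).trans (hmul i d)) _).trans (hmul _ _)

theorem top_mul_mul_top_le_sup_iSup_ne (htop : iSup 𝒜 = ⊤)
    (hmul : ∀ i j : ℕ, 𝒜 i * 𝒜 j ≤ 𝒜 (i + j)) {G M : Submodule k T} {d n : ℕ} (hG : G ≤ 𝒜 d)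
    (h : ∀ i j, i + d + j = n → 𝒜 i * G * 𝒜 j ≤ M) :
    ⊤ * G * ⊤ ≤ M ⊔ ⨆ (m) (_ : m ≠ n), 𝒜 m := by
  rw [← htop]
  simp only [Submodule.iSup_mul, Submodule.mul_iSup]
  refine iSup₂_le fun j i => ?_
  by_cases hn : i + d + j = n
  · exact le_sup_of_le_left (h i j hn)
  · exact le_sup_of_le_right (le_iSup₂_of_le (i + d + j) hn (mul_mul_le_of_le hmul hG i j))

def IsGradedLeibniz (𝒜 : ℕ → Submodule k T) (δ : T →ₗ[k] T) : Prop :=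
  ∀ i j : ℕ, ∀ a ∈ 𝒜 i, ∀ b ∈ 𝒜 j, δ (a * b) = δ a * b + ((-1 : k) ^ i) • (a * δ b)

variable {δ : T →ₗ[k] T}

theorem IsGradedLeibniz.map_mul_le (hLeib : IsGradedLeibniz 𝒜 δ) {X Y : Submodule k T} {i j : ℕ}
    (hX : X ≤ 𝒜 i) (hY : Y ≤ 𝒜 j) : (X * Y).map δ ≤ X.map δ * Y + X * Y.map δ := by
  rw [Submodule.map_le_iff_le_comap, Submodule.mul_le]
  intro x hx y hy
  rw [Submodule.mem_comap, hLeib i j x (hX hx) y (hY hy)]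
  exact add_mem (Submodule.mem_sup_left (Submodule.mul_mem_mul (Submodule.mem_map_of_mem hx) hy))
    (Submodule.mem_sup_right
      (Submodule.smul_mem _ _ (Submodule.mul_mem_mul hx (Submodule.mem_map_of_mem hy))))

theorem IsGradedLeibniz.mul_map_le (hLeib : IsGradedLeibniz 𝒜 δ) {X Y : Submodule k T} {i j : ℕ}
    (hX : X ≤ 𝒜 i) (hY : Y ≤ 𝒜 j) : X * Y.map δ ≤ (X * Y).map δ + X.map δ * Y := by
  rw [Submodule.mul_le]
  rintro x hx _ ⟨y, hy, rfl⟩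
  have hsign : (-1 : k) ^ i * (-1 : k) ^ i = 1 := by
    rw [← mul_pow, neg_one_mul, neg_neg, one_pow]
  have hxy : x * δ y = ((-1 : k) ^ i) • (δ (x * y) - δ x * y) := by
    rw [hLeib i j x (hX hx) y (hY hy), add_sub_cancel_left, smul_smul, hsign, one_smul]
  rw [hxy]
  exact Submodule.smul_mem _ _ (sub_mem
    (Submodule.mem_sup_left (Submodule.mem_map_of_mem (Submodule.mul_mem_mul hx hy)))
    (Submodule.mem_sup_right (Submodule.mul_mem_mul (Submodule.mem_map_of_mem hx) hy)))

theorem IsGradedLeibniz.map_mul_le' (hLeib : IsGradedLeibniz 𝒜 δ) {X Y : Submodule k T} {i j : ℕ}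
    (hX : X ≤ 𝒜 i) (hY : Y ≤ 𝒜 j) : X.map δ * Y ≤ (X * Y).map δ + X * Y.map δ := by
  rw [Submodule.mul_le]
  rintro _ ⟨x, hx, rfl⟩ y hy
  have hxy : δ x * y = δ (x * y) - ((-1 : k) ^ i) • (x * δ y) := by
    rw [hLeib i j x (hX hx) y (hY hy), add_sub_cancel_right]
  rw [hxy]
  exact sub_mem (Submodule.mem_sup_left (Submodule.mem_map_of_mem (Submodule.mul_mem_mul hx hy)))
    (Submodule.mem_sup_right
      (Submodule.smul_mem _ _ (Submodule.mul_mem_mul hx (Submodule.mem_map_of_mem hy))))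

variable {S : Submodule k T}

theorem IsGradedLeibniz.map_mul_le_of_left (hLeib : IsGradedLeibniz 𝒜 δ) {X Y : Submodule k T}
    {i j : ℕ} (hX : X ≤ 𝒜 i) (hY : Y ≤ 𝒜 j) (hXS : X ≤ ⊤ * S * ⊤) (hδX : X.map δ ≤ ⊤ * S * ⊤) :
    (X * Y).map δ ≤ ⊤ * S * ⊤ :=
  (hLeib.map_mul_le hX hY).trans (sup_le (Submodule.le_top_mul_mul_top_mul hδX Y)
    (Submodule.le_top_mul_mul_top_mul hXS _))

theorem IsGradedLeibniz.map_mul_le_of_right (hLeib : IsGradedLeibniz 𝒜 δ) {X Y : Submodule k T}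
    {i j : ℕ} (hX : X ≤ 𝒜 i) (hY : Y ≤ 𝒜 j) (hYS : Y ≤ ⊤ * S * ⊤) (hδY : Y.map δ ≤ ⊤ * S * ⊤) :
    (X * Y).map δ ≤ ⊤ * S * ⊤ :=
  (hLeib.map_mul_le hX hY).trans (sup_le (Submodule.mul_le_top_mul_mul_top hYS _)
    (Submodule.mul_le_top_mul_mul_top hδY X))

theorem IsGradedLeibniz.map_top_mul_mul_top_le (hLeib : IsGradedLeibniz 𝒜 δ) (htop : iSup 𝒜 = ⊤)
    (hmul : ∀ i j : ℕ, 𝒜 i * 𝒜 j ≤ 𝒜 (i + j)) {G : Submodule k T} {d : ℕ} (hG : G ≤ 𝒜 d)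
    (hGS : G ≤ ⊤ * S * ⊤) (hδG : G.map δ ≤ ⊤ * S * ⊤) : (⊤ * G * ⊤).map δ ≤ ⊤ * S * ⊤ := by
  conv_lhs => rw [← htop]
  simp only [Submodule.iSup_mul, Submodule.mul_iSup, Submodule.map_iSup]
  refine iSup₂_le fun j i => ?_
  have hGj : G * 𝒜 j ≤ 𝒜 (d + j) := (mul_le_mul_left hG _).trans (hmul d j)
  rw [mul_assoc]
  exact hLeib.map_mul_le_of_right le_rfl hGj (Submodule.le_top_mul_mul_top_mul hGS _)
    (hLeib.map_mul_le_of_left hG le_rfl hGS hδG)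

end Graded

section Ditalgebra

variable {k T : Type*} [CommRing k] [Ring T] [Algebra k T] {𝒜 : ℕ → Submodule k T}
  {δ : T →ₗ[k] T} {I S : Submodule k T}

/-- The paper's `I_V`, with `V = 𝒜 1`. -/
def idealV (𝒜 : ℕ → Submodule k T) (δ : T →ₗ[k] T) (I : Submodule k T) : Submodule k T :=
  I * 𝒜 1 + I.map δ + 𝒜 1 * I

theorem mul_le_idealV : I * 𝒜 1 ≤ idealV 𝒜 δ I := le_sup_of_le_left le_sup_left

theorem map_le_idealV : I.map δ ≤ idealV 𝒜 δ I := le_sup_of_le_left le_sup_right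

theorem mul_le_idealV' : 𝒜 1 * I ≤ idealV 𝒜 δ I := le_sup_right

theorem idealV_le (hmul : ∀ i j : ℕ, 𝒜 i * 𝒜 j ≤ 𝒜 (i + j)) (hdeg : (𝒜 0).map δ ≤ 𝒜 1)
    (hI0 : I ≤ 𝒜 0) : idealV 𝒜 δ I ≤ 𝒜 1 :=
  sup_le (sup_le ((mul_le_mul_left hI0 _).trans (hmul 0 1)) ((Submodule.map_mono hI0).trans hdeg))
    ((mul_le_mul_right hI0 _).trans (hmul 1 0))

theorem mul_idealV_le (hLeib : IsGradedLeibniz 𝒜 δ) (hmul : ∀ i j : ℕ, 𝒜 i * 𝒜 j ≤ 𝒜 (i + j))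
    (hdeg : (𝒜 0).map δ ≤ 𝒜 1) (hI0 : I ≤ 𝒜 0) (hIl : 𝒜 0 * I ≤ I) :
    𝒜 0 * idealV 𝒜 δ I ≤ idealV 𝒜 δ I := by
  rw [idealV, mul_add, mul_add, ← mul_assoc, ← mul_assoc]
  refine sup_le (sup_le ((mul_le_mul_left hIl _).trans mul_le_idealV) ?_)
    ((mul_le_mul_left (hmul 0 1) I).trans mul_le_idealV')
  exact (hLeib.mul_map_le le_rfl hI0).trans (sup_le ((Submodule.map_mono hIl).trans map_le_idealV)
    ((mul_le_mul_left hdeg I).trans mul_le_idealV'))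

theorem idealV_mul_le (hLeib : IsGradedLeibniz 𝒜 δ) (hmul : ∀ i j : ℕ, 𝒜 i * 𝒜 j ≤ 𝒜 (i + j))
    (hdeg : (𝒜 0).map δ ≤ 𝒜 1) (hI0 : I ≤ 𝒜 0) (hIr : I * 𝒜 0 ≤ I) :
    idealV 𝒜 δ I * 𝒜 0 ≤ idealV 𝒜 δ I := by
  rw [idealV, add_mul, add_mul, mul_assoc, mul_assoc]
  refine sup_le (sup_le ((mul_le_mul_right (hmul 1 0) I).trans mul_le_idealV) ?_)
    ((mul_le_mul_right hIr _).trans mul_le_idealV')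
  exact (hLeib.map_mul_le' hI0 le_rfl).trans (sup_le ((Submodule.map_mono hIr).trans map_le_idealV)
    ((mul_le_mul_right hdeg I).trans mul_le_idealV))

theorem map_idealV_le (hLeib : IsGradedLeibniz 𝒜 δ) (hI0 : I ≤ 𝒜 0) (hIS : I ≤ ⊤ * S * ⊤)
    (hδI : I.map δ ≤ ⊤ * S * ⊤) (hδδI : (I.map δ).map δ ≤ ⊤ * S * ⊤) :
    (idealV 𝒜 δ I).map δ ≤ ⊤ * S * ⊤ := by
  rw [idealV, Submodule.add_eq_sup, Submodule.add_eq_sup, Submodule.map_sup, Submodule.map_sup]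
  exact sup_le (sup_le (hLeib.map_mul_le_of_left hI0 le_rfl hIS hδI) hδδI)
    (hLeib.map_mul_le_of_right le_rfl hI0 hIS hδI)

theorem map_map_le_of_interlaced (hI0 : I ≤ 𝒜 0)
    (h : ∀ a ∈ 𝒜 0, δ (δ a) ∈ I * (𝒜 1 * 𝒜 1) + 𝒜 1 * I * 𝒜 1 + (𝒜 1 * 𝒜 1) * I) :
    (I.map δ).map δ ≤ ⊤ * I * ⊤ := by
  rw [← Submodule.map_comp, Submodule.map_le_iff_le_comap]
  intro a ha
  refine (?_ : _ ≤ ⊤ * I * ⊤) (h a (hI0 ha))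
  refine sup_le (sup_le ?_ (Submodule.mul_mul_le_top_mul_mul_top _ _ _)) ?_
  · simpa only [one_mul] using Submodule.mul_mul_le_top_mul_mul_top I 1 (𝒜 1 * 𝒜 1)
  · simpa only [mul_one] using Submodule.mul_mul_le_top_mul_mul_top I (𝒜 1 * 𝒜 1) 1

theorem map_map_le_of_le_mul_add_mul (hLeib : IsGradedLeibniz 𝒜 δ) (hI0 : I ≤ 𝒜 0)
    (h : I.map δ ≤ I * 𝒜 1 + 𝒜 1 * I) (hIS : I ≤ ⊤ * S * ⊤) (hδI : I.map δ ≤ ⊤ * S * ⊤) :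
    (I.map δ).map δ ≤ ⊤ * S * ⊤ := by
  refine (Submodule.map_mono h).trans ?_
  rw [Submodule.add_eq_sup, Submodule.map_sup]
  exact sup_le (hLeib.map_mul_le_of_left hI0 le_rfl hIS hδI)
    (hLeib.map_mul_le_of_right le_rfl hI0 hIS hδI)

theorem top_mul_add_idealV_mul_top_inf_zero_le (hind : iSupIndep 𝒜) (htop : iSup 𝒜 = ⊤)
    (hmul : ∀ i j : ℕ, 𝒜 i * 𝒜 j ≤ 𝒜 (i + j)) (hdeg : (𝒜 0).map δ ≤ 𝒜 1) (hI0 : I ≤ 𝒜 0)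
    (hIl : 𝒜 0 * I ≤ I) (hIr : I * 𝒜 0 ≤ I) : ⊤ * (I + idealV 𝒜 δ I) * ⊤ ⊓ 𝒜 0 ≤ I := by
  refine hind.inf_le_of_le_sup_iSup_ne hI0 ?_
  rw [mul_add, add_mul]
  refine sup_le (top_mul_mul_top_le_sup_iSup_ne htop hmul hI0 fun i j hij => ?_)
    (top_mul_mul_top_le_sup_iSup_ne htop hmul (idealV_le hmul hdeg hI0) fun i j hij => ?_)
  · obtain ⟨rfl, rfl⟩ : i = 0 ∧ j = 0 := by omega
    exact (mul_le_mul_left hIl _).trans hIr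
  · omega

theorem top_mul_add_idealV_mul_top_inf_one_le (hLeib : IsGradedLeibniz 𝒜 δ) (hind : iSupIndep 𝒜)
    (htop : iSup 𝒜 = ⊤) (hmul : ∀ i j : ℕ, 𝒜 i * 𝒜 j ≤ 𝒜 (i + j)) (hdeg : (𝒜 0).map δ ≤ 𝒜 1)
    (hI0 : I ≤ 𝒜 0) (hIl : 𝒜 0 * I ≤ I) (hIr : I * 𝒜 0 ≤ I) :
    ⊤ * (I + idealV 𝒜 δ I) * ⊤ ⊓ 𝒜 1 ≤ idealV 𝒜 δ I := by
  have hIV1 := idealV_le hmul hdeg hI0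
  refine hind.inf_le_of_le_sup_iSup_ne hIV1 ?_
  rw [mul_add, add_mul]
  refine sup_le (top_mul_mul_top_le_sup_iSup_ne htop hmul hI0 fun i j hij => ?_)
    (top_mul_mul_top_le_sup_iSup_ne htop hmul hIV1 fun i j hij => ?_)
  · obtain ⟨rfl, rfl⟩ | ⟨rfl, rfl⟩ : i = 0 ∧ j = 1 ∨ i = 1 ∧ j = 0 := by omega
    · exact (mul_le_mul_left hIl _).trans mul_le_idealV
    · rw [mul_assoc]
      exact (mul_le_mul_right hIr _).trans mul_le_idealV'
  · obtain ⟨rfl, rfl⟩ : i = 0 ∧ j = 0 := by omega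
    exact (mul_le_mul_left (mul_idealV_le hLeib hmul hdeg hI0 hIl) _).trans
      (idealV_mul_le hLeib hmul hdeg hI0 hIr)

end Ditalgebra

theorem ideal_generated_is_delta_stable_general {k T : Type*} [Field k] [Ring T]
    [Algebra k T]
    (𝒜 : ℕ → Submodule k T)
    (hmul : ∀ i j : ℕ, 𝒜 i * 𝒜 j ≤ 𝒜 (i + j))
    (hInternal : DirectSum.IsInternal 𝒜)
    (δ : T →ₗ[k] T)
    (hdeg : ∀ i : ℕ, ∀ x ∈ 𝒜 i, δ x ∈ 𝒜 (i + 1))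
    (hLeib : ∀ i j : ℕ, ∀ a ∈ 𝒜 i, ∀ b ∈ 𝒜 j,
      δ (a * b) = δ a * b + ((-1 : k) ^ i) • (a * δ b))
    (I : Submodule k T) (hI0 : I ≤ 𝒜 0)
    (hIl : 𝒜 0 * I ≤ I) (hIr : I * 𝒜 0 ≤ I)
    (hcase :
      ((∀ a ∈ 𝒜 0, δ (δ a) ∈
          I * (𝒜 1 * 𝒜 1) + 𝒜 1 * I * 𝒜 1 + (𝒜 1 * 𝒜 1) * I) ∧
        (∀ v ∈ 𝒜 1, δ (δ v) ∈
          I * (𝒜 1 * 𝒜 1 * 𝒜 1) + 𝒜 1 * I * (𝒜 1 * 𝒜 1) +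
            (𝒜 1 * 𝒜 1) * I * 𝒜 1 + (𝒜 1 * 𝒜 1 * 𝒜 1) * I)) ∨
      Submodule.map δ I ≤ I * 𝒜 1 + 𝒜 1 * I) :
    (let IV : Submodule k T := I * 𝒜 1 + Submodule.map δ I + 𝒜 1 * I
     let J : Submodule k T := ⊤ * (I + IV) * ⊤
     Submodule.map δ J ≤ J ∧ J ⊓ 𝒜 0 = I ∧ J ⊓ 𝒜 1 = IV ∧
       (Submodule.map δ I ≤ I * 𝒜 1 + 𝒜 1 * I → IV = I * 𝒜 1 + 𝒜 1 * I)) := by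
  intro IV J
  have hLeib : IsGradedLeibniz 𝒜 δ := hLeib
  have hδ0 : (𝒜 0).map δ ≤ 𝒜 1 := Submodule.map_le_iff_le_comap.2 (hdeg 0)
  have htop := hInternal.submodule_iSup_eq_top
  have hind := hInternal.submodule_iSupIndep
  have hIV1 : IV ≤ 𝒜 1 := idealV_le hmul hδ0 hI0
  have hIJ : I ≤ J := le_sup_left.trans (Submodule.le_top_mul_mul_top _)
  have hIVJ : IV ≤ J := le_sup_right.trans (Submodule.le_top_mul_mul_top _)
  have hδIJ : I.map δ ≤ J := map_le_idealV.trans hIVJ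
  have hδδIJ : (I.map δ).map δ ≤ J := by
    rcases hcase with ⟨hinter, -⟩ | hδI
    · exact (map_map_le_of_interlaced hI0 hinter).trans
        (mul_le_mul_left (mul_le_mul_right le_sup_left ⊤) ⊤)
    · exact map_map_le_of_le_mul_add_mul hLeib hI0 hδI hIJ hδIJ
  refine ⟨?_, le_antisymm ?_ (le_inf hIJ hI0), le_antisymm ?_ (le_inf hIVJ hIV1), fun hδI => ?_⟩
  · change (⊤ * (I + IV) * ⊤).map δ ≤ J
    rw [mul_add, add_mul, Submodule.add_eq_sup, Submodule.map_sup]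
    exact sup_le (hLeib.map_top_mul_mul_top_le htop hmul hI0 hIJ hδIJ)
      (hLeib.map_top_mul_mul_top_le htop hmul hIV1 hIVJ (map_idealV_le hLeib hI0 hIJ hδIJ hδδIJ))
  · exact top_mul_add_idealV_mul_top_inf_zero_le hind htop hmul hδ0 hI0 hIl hIr
  · exact top_mul_add_idealV_mul_top_inf_one_le hLeib hind htop hmul hδ0 hI0 hIl hIr
  · exact le_antisymm (sup_le (sup_le le_sup_left hδI) le_sup_right)
      (sup_le (le_sup_left.trans le_sup_left) le_sup_right)

/-- Let `(𝒜, I)` be a weak ditalgebra with an ideal `I` of `A` such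
that either `𝒜` is interlaced with `I`, or `δ(I) ⊆ IV + VI`.  Put
`I_V = IV + δ(I) + VI ⊆ V`.  Then the ideal `J` of `T` generated by `I` and `I_V`
satisfies `δ(J) ⊆ J`; in particular `J ∩ A = I`, `J ∩ V = I_V`, and if
`δ(I) ⊆ IV + VI` then `I_V = IV + VI`. -/
theorem ideal_generated_is_delta_stable {k T : Type*} [Field k] [Ring T]
    [Algebra k T]
    (𝒜 : ℕ → Submodule k T) (hone : (1 : T) ∈ 𝒜 0)
    (hmul : ∀ i j : ℕ, 𝒜 i * 𝒜 j ≤ 𝒜 (i + j))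
    (hgen : ∀ i : ℕ, 𝒜 (i + 1) = 𝒜 i * 𝒜 1)
    (hInternal : DirectSum.IsInternal 𝒜)
    (δ : T →ₗ[k] T)
    (hdeg : ∀ i : ℕ, ∀ x ∈ 𝒜 i, δ x ∈ 𝒜 (i + 1))
    (hLeib : ∀ i j : ℕ, ∀ a ∈ 𝒜 i, ∀ b ∈ 𝒜 j,
      δ (a * b) = δ a * b + ((-1 : k) ^ i) • (a * δ b))
    (I : Submodule k T) (hI0 : I ≤ 𝒜 0)
    (hIl : 𝒜 0 * I ≤ I) (hIr : I * 𝒜 0 ≤ I)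
    (hcase :
      ((∀ a ∈ 𝒜 0, δ (δ a) ∈
          I * (𝒜 1 * 𝒜 1) + 𝒜 1 * I * 𝒜 1 + (𝒜 1 * 𝒜 1) * I) ∧
        (∀ v ∈ 𝒜 1, δ (δ v) ∈
          I * (𝒜 1 * 𝒜 1 * 𝒜 1) + 𝒜 1 * I * (𝒜 1 * 𝒜 1) +
            (𝒜 1 * 𝒜 1) * I * 𝒜 1 + (𝒜 1 * 𝒜 1 * 𝒜 1) * I)) ∨
      Submodule.map δ I ≤ I * 𝒜 1 + 𝒜 1 * I) :
    (let IV : Submodule k T := I * 𝒜 1 + Submodule.map δ I + 𝒜 1 * I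
     let J : Submodule k T := ⊤ * (I + IV) * ⊤
     Submodule.map δ J ≤ J ∧ J ⊓ 𝒜 0 = I ∧ J ⊓ 𝒜 1 = IV ∧
       (Submodule.map δ I ≤ I * 𝒜 1 + 𝒜 1 * I → IV = I * 𝒜 1 + 𝒜 1 * I)) :=
  ideal_generated_is_delta_stable_general 𝒜 hmul hInternal δ hdeg hLeib I hI0 hIl hIr hcase
end

section
/- Let R be a principal ideal domain and 0 = U₀ ⊆ U₁ ⊆ ⋯ ⊆ U_ℓ = U a filtration of a finitely generated R-module U. Then there exists h ∈ R, h ≠ 0, such that the localization R_h ⊗_R U is a free R_h-module and each inclusion R_h ⊗_R U_i ⊆ R_h ⊗_R U_{i+1} is a split inclusion of free R_h-modules (i.e., the filtration becomes additive: each term is a direct summand of the next). -/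
/-!
Over a Noetherian domain the torsion of a finitely generated module is killed by one nonzero
element, so a single `h ≠ 0` kills the torsion of every quotient `U ⧸ F j`. After inverting `h`
all these quotients become torsion-free, hence free over the PID `R_h`. Then `U_h = U_h ⧸ 0` is
free, every `(F j)_h` is free as a submodule of it, and `(F (i+1))_h ⧸ (F i)_h`, which embeds in
the torsion-free `U_h ⧸ (F i)_h`, is free, hence projective, so `(F i)_h` has a complement in
`(F (i+1))_h`.
-/

open Submodule Module
open scoped nonZeroDivisors

theorem Submodule.exists_mem_nonZeroDivisors_smul_eq_zero_of_mem_torsion {R M : Type*}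
    [CommRing R] [IsNoetherianRing R] [AddCommGroup M] [Module R M] [Module.Finite R M] :
    ∃ r ∈ R⁰, ∀ m ∈ torsion R M, r • m = 0 := by
  obtain ⟨r, hr, hr0⟩ :=
    annihilator_top_inter_nonZeroDivisors (torsion_isTorsion (R := R) (M := M))
  exact ⟨r, hr0, fun m hm => congrArg Subtype.val (mem_annihilator.mp hr ⟨m, hm⟩ trivial)⟩

theorem Submodule.exists_mem_nonZeroDivisors_smul_eq_zero_of_mem_torsion_pi {R ι : Type*}
    [CommRing R] [IsNoetherianRing R] [Finite ι] (M : ι → Type*) [∀ i, AddCommGroup (M i)]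
    [∀ i, Module R (M i)] [∀ i, Module.Finite R (M i)] :
    ∃ r ∈ R⁰, ∀ i, ∀ m ∈ torsion R (M i), r • m = 0 := by
  classical
  obtain ⟨r, hr0, hr⟩ :=
    exists_mem_nonZeroDivisors_smul_eq_zero_of_mem_torsion (R := R) (M := ∀ i, M i)
  refine ⟨r, hr0, fun i m ⟨a, ha⟩ => ?_⟩
  have hsingle : Pi.single i m ∈ torsion R (∀ i, M i) :=
    ⟨a, by rw [← Pi.single_smul, ha, Pi.single_zero]⟩
  simpa [← Pi.single_smul] using hr _ hsingle

theorem isTorsionFree_localizedModule_of_smul_torsion_eq_zero {R Q : Type*} [CommRing R]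
    [IsDomain R] [AddCommGroup Q] [Module R Q] {h : R} (hh : ∀ m ∈ torsion R Q, h • m = 0) :
    IsTorsionFree (Localization.Away h) (LocalizedModule (Submonoid.powers h) Q) := by
  -- `h` kills the torsion, so localizing `Q` is the same as localizing `Q ⧸ torsion R Q`.
  have hT : (torsion R Q).localized (Submonoid.powers h) = ⊥ := by
    refine eq_bot_iff.mpr ?_
    rintro _ ⟨m, hm, s, rfl⟩
    exact (IsLocalizedModule.mk'_eq_zero' _ s).mpr ⟨⟨h, Submonoid.mem_powers h⟩, hh m hm⟩
  let e := (quotEquivOfEqBot _ hT).symm ≪≫ₗ localizedQuotientEquiv _ (torsion R Q)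
  exact e.injective.moduleIsTorsionFree _ (map_smul e)

theorem isTorsionFree_quotient_localized_of_smul_torsion_eq_zero {R U : Type*} [CommRing R]
    [IsDomain R] [AddCommGroup U] [Module R U] {N : Submodule R U} {h : R}
    (hh : ∀ m ∈ torsion R (U ⧸ N), h • m = 0) :
    IsTorsionFree (Localization.Away h)
      (LocalizedModule (Submonoid.powers h) U ⧸ N.localized (Submonoid.powers h)) :=
  have := isTorsionFree_localizedModule_of_smul_torsion_eq_zero hh
  (localizedQuotientEquiv _ N).injective.moduleIsTorsionFree _ (map_smul _)

theorem IsLocalization.isPrincipalIdealRing {R : Type*} [CommRing R] [IsPrincipalIdealRing R]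
    (p : Submonoid R) (S : Type*) [CommRing S] [Algebra R S] [IsLocalization p S] :
    IsPrincipalIdealRing S where
  principal J := by
    obtain ⟨a, ha⟩ := (IsPrincipalIdealRing.principal (J.comap (algebraMap R S))).principal
    refine ⟨algebraMap R S a, ?_⟩
    rw [← IsLocalization.map_under p S J, Ideal.under_def, ha, Ideal.submodule_span_eq,
      Ideal.map_span, Set.image_singleton]

theorem Submodule.exists_isCompl_of_projective_quotient {R M : Type*} [Ring R] [AddCommGroup M]
    [Module R M] (p : Submodule R M) [Projective R (M ⧸ p)] :
    ∃ q : Submodule R M, IsCompl p q := by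
  obtain ⟨g, hg⟩ := p.mkQ.exists_rightInverse_of_surjective p.range_mkQ
  have hidem : IsIdempotentElem (g ∘ₗ p.mkQ) := by
    rw [IsIdempotentElem, Module.End.mul_eq_comp, LinearMap.comp_assoc,
      ← LinearMap.comp_assoc p.mkQ, hg, LinearMap.id_comp]
  have hker : LinearMap.ker (g ∘ₗ p.mkQ) = p := by
    rw [LinearMap.ker_comp, LinearMap.ker_eq_bot_of_inverse hg, comap_bot, ker_mkQ]
  have hrange : LinearMap.range (g ∘ₗ p.mkQ) = LinearMap.range g :=
    LinearMap.range_comp_of_range_eq_top g p.range_mkQ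
  refine ⟨LinearMap.range g, ?_⟩
  simpa only [hker, hrange] using (LinearMap.IsIdempotentElem.isCompl hidem).symm

theorem Submodule.exists_inf_eq_bot_sup_eq_of_le {A M : Type*} [CommRing A] [IsDomain A]
    [IsPrincipalIdealRing A] [AddCommGroup M] [Module A M] {L L' : Submodule A M} (hle : L ≤ L')
    [IsTorsionFree A (M ⧸ L)] [Module.Finite A L'] :
    ∃ C : Submodule A M, L ⊓ C = ⊥ ∧ L ⊔ C = L' := by
  set q := L.comap L'.subtype
  have : IsTorsionFree A (L' ⧸ q) := by
    have hinj : Function.Injective (q.mapQ L L'.subtype le_rfl) := by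
      rw [← LinearMap.ker_eq_bot, ker_mapQ, mkQ_map_self]
    exact hinj.moduleIsTorsionFree _ (map_smul _)
  obtain ⟨C, hC⟩ := q.exists_isCompl_of_projective_quotient
  have hqL : q.map L'.subtype = L := by rw [map_comap_subtype, inf_eq_right.mpr hle]
  refine ⟨C.map L'.subtype, ?_, ?_⟩
  · rw [← hqL, ← map_inf _ L'.injective_subtype, hC.inf_eq_bot, map_bot]
  · rw [← hqL, ← map_sup, hC.sup_eq_top, map_top, range_subtype]

theorem filtration_localization_additive_general {R : Type*} [CommRing R] [IsDomain R]
    [IsPrincipalIdealRing R] (U : Type*) [AddCommGroup U] [Module R U]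
    [Module.Finite R U] (ℓ : ℕ) (F : Fin (ℓ + 1) → Submodule R U)
    (hmono : Monotone F) (h0 : F 0 = ⊥) :
    ∃ h : R, h ≠ 0 ∧
      Module.Free (Localization.Away h) (LocalizedModule (Submonoid.powers h) U) ∧
      (let L : Fin (ℓ + 1) → Submodule (Localization.Away h)
          (LocalizedModule (Submonoid.powers h) U) :=
        fun j => Submodule.span (Localization.Away h)
          ((LocalizedModule.mkLinearMap (Submonoid.powers h) U) '' (F j : Set U))
      (∀ j, Module.Free (Localization.Away h) (L j)) ∧
      ∀ i : Fin ℓ, ∃ C : Submodule (Localization.Away h)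
          (LocalizedModule (Submonoid.powers h) U),
        L i.castSucc ⊓ C = ⊥ ∧ L i.castSucc ⊔ C = L i.succ) := by
  obtain ⟨h, hh0, hh⟩ := exists_mem_nonZeroDivisors_smul_eq_zero_of_mem_torsion_pi
    (R := R) fun j => U ⧸ F j
  have := Localization.Away.isDomain (nonZeroDivisors.ne_zero hh0)
  have := IsLocalization.isPrincipalIdealRing (Submonoid.powers h) (Localization.Away h)
  have hL (j) : span (Localization.Away h)
      (LocalizedModule.mkLinearMap (Submonoid.powers h) U '' F j) =
        (F j).localized (Submonoid.powers h) := by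
    simpa only [span_eq] using (localized'_span (Localization.Away h) (Submonoid.powers h)
      (LocalizedModule.mkLinearMap (Submonoid.powers h) U) (F j : Set U)).symm
  have htf (j) := isTorsionFree_quotient_localized_of_smul_torsion_eq_zero (hh j)
  have : IsTorsionFree (Localization.Away h) (LocalizedModule (Submonoid.powers h) U) := by
    have h0' : (F 0).localized (Submonoid.powers h) = ⊥ := by rw [h0]; exact localized'_bot _ _ _
    have := htf 0
    exact (quotEquivOfEqBot _ h0').symm.injective.moduleIsTorsionFree _ (map_smul _)
  refine ⟨h, nonZeroDivisors.ne_zero hh0, inferInstance, ?_⟩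
  simp only [hL]
  refine ⟨fun j => inferInstance, fun i => ?_⟩
  have := htf i.castSucc
  refine exists_inf_eq_bot_sup_eq_of_le ?_
  rintro _ ⟨m, hm, s, rfl⟩
  exact ⟨m, hmono i.castSucc_le_succ hm, s, rfl⟩

/-- Let `R` be a PID and `0 = U₀ ⊆ U₁ ⊆ ⋯ ⊆ U_ℓ = U` a filtration of a
finitely generated `R`-module `U`.  Then there is a nonzero `h ∈ R` such that the
localization `R_h ⊗_R U` is free, each localized filtration term is free, and each
inclusion of consecutive localized terms is split (each term is a direct summand of
the next). -/
theorem filtration_localization_additive {R : Type*} [CommRing R] [IsDomain R]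
    [IsPrincipalIdealRing R] (U : Type*) [AddCommGroup U] [Module R U]
    [Module.Finite R U] (ℓ : ℕ) (F : Fin (ℓ + 1) → Submodule R U)
    (hmono : Monotone F) (h0 : F 0 = ⊥) (hlast : F (Fin.last ℓ) = ⊤) :
    ∃ h : R, h ≠ 0 ∧
      Module.Free (Localization.Away h) (LocalizedModule (Submonoid.powers h) U) ∧
      (let L : Fin (ℓ + 1) → Submodule (Localization.Away h)
          (LocalizedModule (Submonoid.powers h) U) :=
        fun j => Submodule.span (Localization.Away h)
          ((LocalizedModule.mkLinearMap (Submonoid.powers h) U) '' (F j : Set U))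
      (∀ j, Module.Free (Localization.Away h) (L j)) ∧
      ∀ i : Fin ℓ, ∃ C : Submodule (Localization.Away h)
          (LocalizedModule (Submonoid.powers h) U),
        L i.castSucc ⊓ C = ⊥ ∧ L i.castSucc ⊔ C = L i.succ) :=
  filtration_localization_additive_general U ℓ F hmono h0
end

section
/- Let ({\cal A}, I) be a triangular interlaced weak ditalgebra with a source idempotent e₀ (a centrally primitive idempotent of the minimal algebra R with e₀W = 0, Re₀ = ke₀, e₀ ∉ I), and set f = 1 − e₀. Then the subalgebra T^⊖ := T_R(fWf) of T = T_R(W) is invariant under the differential δ, and T^⊖ = ke₀ × fTf as k-algebras; moreover fW^n f = (fWf)^n for all n ≥ 1. -/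
/-!
Put `f = 1 - e₀`. Because `e₀` kills `W` and `R e₀ = k e₀`, the elements `t` with `e₀ t ∈ k e₀`
form a subalgebra containing the generators, so `e₀ T = k e₀`. Hence `e₀ T f = 0`, i.e.
`f t f = t f`, and the corner map `t ↦ f t f` is multiplicative; this gives `f W^n f = (f W f)^n`
and `f T f ⊆ T^⊖`. For any idempotent `e₀` the sum `k e₀ + f T f` is a subalgebra, and it contains
the generators of `T^⊖` (each `r ∈ R` is `c e₀ + f r f`), so `T^⊖ = k e₀ + f T f`. As `e₀` and `f`
are `δ`-constants of degree `0`, `δ (c e₀ + f t f) = f (δ t) f`, so `T^⊖` is `δ`-stable.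
-/

open Submodule

theorem mul_mem_span_singleton_of_mem_adjoin {k T : Type*} [CommSemiring k] [Semiring T]
    [Algebra k T] {e : T} {s : Set T} (hs : ∀ x ∈ s, e * x ∈ k ∙ e) {t : T}
    (ht : t ∈ Algebra.adjoin k s) : e * t ∈ k ∙ e := by
  induction ht using Algebra.adjoin_induction with
  | mem x hx => exact hs x hx
  | algebraMap c =>
    rw [Algebra.algebraMap_eq_smul_one, mul_smul_comm, mul_one]
    exact smul_mem _ c (mem_span_singleton_self e)
  | add x y _ _ hx hy => rw [mul_add]; exact add_mem hx hy
  | mul x y _ _ hx hy =>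
    obtain ⟨c, hc⟩ := mem_span_singleton.1 hx
    rw [← mul_assoc, ← hc, smul_mul_assoc]
    exact smul_mem _ c hy

theorem corner_mul_of_forall_mul_mul_eq {T : Type*} [Semiring T] {f : T}
    (hf : ∀ b, f * b * f = b * f) (a b : T) :
    f * (a * b) * f = f * a * f * (f * b * f) := by
  calc f * (a * b) * f = f * a * (b * f) := by simp only [mul_assoc]
    _ = f * a * (f * (f * b) * f) := by rw [hf, hf]
    _ = f * a * f * (f * b * f) := by simp only [mul_assoc]

theorem Submodule.map_mul_of_map_mul {R A B : Type*} [CommSemiring R] [Semiring A] [Semiring B]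
    [Algebra R A] [Algebra R B] (φ : A →ₗ[R] B) (hφ : ∀ x y, φ (x * y) = φ x * φ y)
    (M N : Submodule R A) : map φ (M * N) = map φ M * map φ N := by
  let m : A →ₙ* B := ⟨φ, hφ⟩
  rw [← span_eq M, ← span_eq N, span_mul_span, map_span, map_span, map_span, span_mul_span]
  exact congrArg (span R) (Set.image_mul m)

theorem Submodule.map_pow_of_map_mul {R A B : Type*} [CommSemiring R] [Semiring A] [Semiring B]
    [Algebra R A] [Algebra R B] (φ : A →ₗ[R] B) (hφ : ∀ x y, φ (x * y) = φ x * φ y)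
    (M : Submodule R A) {n : ℕ} (hn : 1 ≤ n) : map φ (M ^ n) = map φ M ^ n := by
  induction n, hn using Nat.le_induction with
  | base => rw [pow_one, pow_one]
  | succ n _ ih => rw [pow_succ, pow_succ, map_mul_of_map_mul φ hφ, ih]

section GradedLeibniz

variable {k T : Type*} [CommRing k] [Ring T] [Algebra k T] {𝒜 : ℕ → Submodule k T}
  {δ : T →ₗ[k] T}

theorem map_mul_of_mem_zero_left (h𝒜 : ⨆ i, 𝒜 i = ⊤)
    (hLeib : ∀ i j : ℕ, ∀ a ∈ 𝒜 i, ∀ b ∈ 𝒜 j,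
      δ (a * b) = δ a * b + ((-1 : k) ^ i) • (a * δ b))
    {a : T} (ha : a ∈ 𝒜 0) (x : T) : δ (a * x) = δ a * x + a * δ x := by
  refine iSup_induction 𝒜 (motive := fun x => δ (a * x) = δ a * x + a * δ x)
    (h𝒜 ▸ mem_top) (fun j x hx => ?_) (by simp) (fun x y hx hy => ?_)
  · rw [hLeib 0 j a ha x hx, pow_zero, one_smul]
  · rw [mul_add, map_add, hx, hy, map_add, mul_add, mul_add]
    abel

theorem map_mul_of_mem_zero_right (h𝒜 : ⨆ i, 𝒜 i = ⊤)
    (hLeib : ∀ i j : ℕ, ∀ a ∈ 𝒜 i, ∀ b ∈ 𝒜 j,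
      δ (a * b) = δ a * b + ((-1 : k) ^ i) • (a * δ b))
    {c : T} (hc : c ∈ 𝒜 0) (hδc : δ c = 0) (x : T) : δ (x * c) = δ x * c := by
  refine iSup_induction 𝒜 (motive := fun x => δ (x * c) = δ x * c)
    (h𝒜 ▸ mem_top) (fun j x hx => ?_) (by simp) (fun x y hx hy => ?_)
  · rw [hLeib j 0 x hx c hc, hδc, mul_zero, smul_zero, add_zero]
  · rw [add_mul, map_add, hx, hy, map_add, add_mul]

theorem map_mul_mul_of_mem_zero (h𝒜 : ⨆ i, 𝒜 i = ⊤)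
    (hLeib : ∀ i j : ℕ, ∀ a ∈ 𝒜 i, ∀ b ∈ 𝒜 j,
      δ (a * b) = δ a * b + ((-1 : k) ^ i) • (a * δ b))
    {a c : T} (ha : a ∈ 𝒜 0) (hδa : δ a = 0) (hc : c ∈ 𝒜 0) (hδc : δ c = 0) (x : T) :
    δ (a * x * c) = a * δ x * c := by
  rw [map_mul_of_mem_zero_right h𝒜 hLeib hc hδc, map_mul_of_mem_zero_left h𝒜 hLeib ha, hδa,
    zero_mul, zero_add]

end GradedLeibniz

namespace IsIdempotentElem

variable {T : Type*} [Ring T] {e : T}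

def scalarCornerSubalgebra (k : Type*) [CommSemiring k] [Algebra k T]
    (he : IsIdempotentElem e) : Subalgebra k T where
  carrier := {x | ∃ (c : k) (t : T), x = c • e + (1 - e) * t * (1 - e)}
  mul_mem' := by
    rintro _ _ ⟨c, s, rfl⟩ ⟨d, t, rfl⟩
    refine ⟨c * d, s * (1 - e) * t, ?_⟩
    have hef (z : T) : e * ((1 - e) * z) = 0 := by rw [← mul_assoc, he.mul_one_sub_self, zero_mul]
    have hff (z : T) : (1 - e) * ((1 - e) * z) = (1 - e) * z := by rw [← mul_assoc, he.one_sub.eq]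
    simp only [add_mul, mul_add, smul_mul_assoc, mul_smul_comm, mul_assoc, he.eq,
      he.one_sub_mul_self, hef, hff, smul_smul, mul_zero, smul_zero, zero_add, add_zero]
    rw [mul_comm d c]
  add_mem' := by
    rintro _ _ ⟨c, s, rfl⟩ ⟨d, t, rfl⟩
    exact ⟨c + d, s + t, by rw [add_smul, mul_add, add_mul]; abel⟩
  algebraMap_mem' c := ⟨c, c • 1, by
    rw [mul_smul_comm, mul_one, smul_mul_assoc, he.one_sub.eq, ← smul_add, add_sub_cancel,
      Algebra.algebraMap_eq_smul_one]⟩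

theorem mem_scalarCornerSubalgebra_iff {k : Type*} [CommSemiring k] [Algebra k T]
    (he : IsIdempotentElem e) {x : T} :
    x ∈ he.scalarCornerSubalgebra k ↔ ∃ c : k, x = c • e + (1 - e) * x * (1 - e) := by
  refine ⟨?_, fun ⟨c, hc⟩ => ⟨c, x, hc⟩⟩
  rintro ⟨c, t, rfl⟩
  have hff (z : T) : (1 - e) * ((1 - e) * z) = (1 - e) * z := by rw [← mul_assoc, he.one_sub.eq]
  refine ⟨c, ?_⟩
  simp only [mul_add, mul_smul_comm, he.one_sub_mul_self, smul_zero, zero_add, mul_assoc, hff,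
    he.one_sub.eq]

theorem one_sub_mul_mul_one_sub_eq {k : Type*} [CommSemiring k] [Algebra k T]
    (he : IsIdempotentElem e) {b : T} (hb : e * b ∈ k ∙ e) :
    (1 - e) * b * (1 - e) = b * (1 - e) := by
  obtain ⟨c, hc⟩ := mem_span_singleton.1 hb
  rw [sub_mul, one_mul, sub_mul, ← hc, smul_mul_assoc, he.mul_one_sub_self, smul_zero, sub_zero]

end IsIdempotentElem

theorem Algebra.adjoin_union_image_corner_eq_scalarCornerSubalgebra {k T : Type*}
    [CommRing k] [Ring T] [Algebra k T] {R : Subalgebra k T} {W : Set T}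
    (hgen : Algebra.adjoin k ((R : Set T) ∪ W) = ⊤) {e : T} (he : IsIdempotentElem e)
    (heR : e ∈ R) (hRe : ∀ r ∈ R, ∃ c : k, r * e = c • e)
    (hcorner : ∀ t, (1 - e) * t * (1 - e) = t * (1 - e)) :
    Algebra.adjoin k ((R : Set T) ∪ ((fun w => (1 - e) * w * (1 - e)) '' W)) =
      he.scalarCornerSubalgebra k := by
  set B := Algebra.adjoin k ((R : Set T) ∪ ((fun w => (1 - e) * w * (1 - e)) '' W))
  have hsplit (r : T) (hr : r ∈ R) : ∃ c : k, (1 - e) * r * (1 - e) = r - c • e := by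
    obtain ⟨c, hc⟩ := hRe r hr
    exact ⟨c, by rw [hcorner, mul_sub, mul_one, hc]⟩
  have heB : e ∈ B := Algebra.subset_adjoin (Or.inl heR)
  have hRB (r : T) (hr : r ∈ R) : (1 - e) * r * (1 - e) ∈ B := by
    obtain ⟨c, hc⟩ := hsplit r hr
    rw [hc]
    exact sub_mem (Algebra.subset_adjoin (Or.inl hr)) (Subalgebra.smul_mem _ heB c)
  refine le_antisymm (Algebra.adjoin_le ?_) ?_
  · rintro _ (hr | ⟨w, -, rfl⟩)
    · obtain ⟨c, hc⟩ := hsplit _ hr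
      exact ⟨c, _, by rw [hc, add_sub_cancel]⟩
    · exact ⟨0, w, by rw [zero_smul, zero_add]⟩
  · rintro _ ⟨c, t, rfl⟩
    refine add_mem (Subalgebra.smul_mem _ heB c) ?_
    have ht : t ∈ Algebra.adjoin k ((R : Set T) ∪ W) := hgen ▸ Algebra.mem_top
    induction ht using Algebra.adjoin_induction with
    | mem x hx => exact hx.elim (hRB x) fun hx => Algebra.subset_adjoin (Or.inr ⟨x, hx, rfl⟩)
    | algebraMap c => exact hRB _ (R.algebraMap_mem c)
    | add x y _ _ hx hy => rw [mul_add, add_mul]; exact add_mem hx hy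
    | mul x y _ _ hx hy => rw [corner_mul_of_forall_mul_mul_eq hcorner]; exact mul_mem hx hy

theorem source_detachment_general {k T : Type*} [Field k] [Ring T] [Algebra k T]
    (𝒜 : ℕ → Submodule k T)
    (hInternal : DirectSum.IsInternal 𝒜)
    (R : Subalgebra k T) (W : Submodule k T)
    (hR0 : R.toSubmodule ≤ 𝒜 0)
    (hgen : Algebra.adjoin k ((R : Set T) ∪ (W : Set T)) = ⊤)
    (δ : T →ₗ[k] T)
    (hLeib : ∀ i j : ℕ, ∀ a ∈ 𝒜 i, ∀ b ∈ 𝒜 j,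
      δ (a * b) = δ a * b + ((-1 : k) ^ i) • (a * δ b))
    (hδR : ∀ r ∈ R, δ r = 0)
    -- e₀ is a source idempotent:
    (e₀ : T) (he₀R : e₀ ∈ R) (hidem : e₀ * e₀ = e₀)
    (hcentral : ∀ r ∈ R, e₀ * r = r * e₀)
    (he₀W : ∀ w ∈ W, e₀ * w = 0)
    (hRe₀ : ∀ r ∈ R, ∃ c : k, r * e₀ = c • e₀) :
    (let f : T := 1 - e₀
     let corner : T →ₗ[k] T :=
       (LinearMap.mulLeft k f).comp (LinearMap.mulRight k f)
     let Tminus : Subalgebra k T :=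
       Algebra.adjoin k ((R : Set T) ∪ ((fun w => f * w * f) '' (W : Set T)))
     -- (1) T^⊖ is invariant under the differential δ
     (∀ x ∈ Tminus, δ x ∈ Tminus) ∧
     -- (2) T^⊖ = k e₀ × f T f
     (∀ x ∈ Tminus, ∃ c : k, x = c • e₀ + f * x * f) ∧
     (∀ (c : k) (t : T), c • e₀ + f * t * f ∈ Tminus) ∧
     -- (3) f W^n f = (f W f)^n for all n ≥ 1
     (∀ n : ℕ, 1 ≤ n →
       Submodule.map corner (W ^ n) = (Submodule.map corner W) ^ n)) := by
  intro f corner Tminus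
  have he : IsIdempotentElem e₀ := hidem
  have hK (t : T) : e₀ * t ∈ k ∙ e₀ := by
    refine mul_mem_span_singleton_of_mem_adjoin ?_ (hgen ▸ Algebra.mem_top : t ∈ _)
    rintro x (hx | hx)
    · obtain ⟨c, hc⟩ := hRe₀ x hx
      rw [hcentral x hx, hc]
      exact smul_mem _ c (mem_span_singleton_self e₀)
    · rw [he₀W x hx]
      exact zero_mem _
  have hcorner (t : T) : f * t * f = t * f := he.one_sub_mul_mul_one_sub_eq (hK t)
  have hcorner_mul (a b : T) : corner (a * b) = corner a * corner b := by
    simpa only [corner, LinearMap.comp_apply, LinearMap.mulLeft_apply, LinearMap.mulRight_apply,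
      mul_assoc] using corner_mul_of_forall_mul_mul_eq hcorner a b
  have hTminus : Tminus = he.scalarCornerSubalgebra k :=
    Algebra.adjoin_union_image_corner_eq_scalarCornerSubalgebra hgen he he₀R hRe₀ hcorner
  have hf : f ∈ 𝒜 0 := hR0 (sub_mem R.one_mem he₀R)
  have hδf : δ f = 0 := hδR f (sub_mem R.one_mem he₀R)
  refine ⟨?_, fun x hx => he.mem_scalarCornerSubalgebra_iff.1 (hTminus ▸ hx),
    fun c t => hTminus ▸ ⟨c, t, rfl⟩, fun n hn => map_pow_of_map_mul corner hcorner_mul W hn⟩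
  rw [hTminus]
  rintro _ ⟨c, t, rfl⟩
  refine ⟨0, δ t, ?_⟩
  rw [map_add, map_smul, hδR e₀ he₀R, smul_zero, zero_smul, zero_add, zero_add,
    map_mul_mul_of_mem_zero hInternal.submodule_iSup_eq_top hLeib hf hδf hf hδf]

/-- Let `(𝒜, I)` be a triangular interlaced weak ditalgebra with a
source idempotent `e₀` (`e₀W = 0`, `Re₀ = ke₀`, `e₀ ∉ I`) and `f = 1 - e₀`.  Then
the subalgebra `T^⊖ = T_R(fWf)` of `T = T_R(W)` is invariant under `δ`,
`T^⊖ = ke₀ × fTf` as `k`-algebras, and `fW^nf = (fWf)^n` for all `n ≥ 1`. -/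
theorem source_detachment {k T : Type*} [Field k] [Ring T] [Algebra k T]
    (𝒜 : ℕ → Submodule k T) (hone : (1 : T) ∈ 𝒜 0)
    (hmul : ∀ i j : ℕ, 𝒜 i * 𝒜 j ≤ 𝒜 (i + j))
    (hInternal : DirectSum.IsInternal 𝒜)
    (R : Subalgebra k T) (W W₀ W₁ : Submodule k T)
    (hW : W = W₀ ⊔ W₁) (hW0 : W₀ ≤ 𝒜 0) (hW1 : W₁ ≤ 𝒜 1)
    (hR0 : R.toSubmodule ≤ 𝒜 0)
    (hgen : Algebra.adjoin k ((R : Set T) ∪ (W : Set T)) = ⊤)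
    (δ : T →ₗ[k] T)
    (hdeg : ∀ i : ℕ, ∀ x ∈ 𝒜 i, δ x ∈ 𝒜 (i + 1))
    (hLeib : ∀ i j : ℕ, ∀ a ∈ 𝒜 i, ∀ b ∈ 𝒜 j,
      δ (a * b) = δ a * b + ((-1 : k) ^ i) • (a * δ b))
    (hδR : ∀ r ∈ R, δ r = 0)
    (I : Submodule k T) (hIA : I ≤ 𝒜 0)
    -- e₀ is a source idempotent:
    (e₀ : T) (he₀R : e₀ ∈ R) (hidem : e₀ * e₀ = e₀)
    (hcentral : ∀ r ∈ R, e₀ * r = r * e₀)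
    (he₀W : ∀ w ∈ W, e₀ * w = 0)
    (hRe₀ : ∀ r ∈ R, ∃ c : k, r * e₀ = c • e₀)
    (he₀I : e₀ ∉ I) :
    (let f : T := 1 - e₀
     let corner : T →ₗ[k] T :=
       (LinearMap.mulLeft k f).comp (LinearMap.mulRight k f)
     let Tminus : Subalgebra k T :=
       Algebra.adjoin k ((R : Set T) ∪ ((fun w => f * w * f) '' (W : Set T)))
     -- (1) T^⊖ is invariant under the differential δ
     (∀ x ∈ Tminus, δ x ∈ Tminus) ∧
     -- (2) T^⊖ = k e₀ × f T f
     (∀ x ∈ Tminus, ∃ c : k, x = c • e₀ + f * x * f) ∧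
     (∀ (c : k) (t : T), c • e₀ + f * t * f ∈ Tminus) ∧
     -- (3) f W^n f = (f W f)^n for all n ≥ 1
     (∀ n : ℕ, 1 ≤ n →
       Submodule.map corner (W ^ n) = (Submodule.map corner W) ^ n)) :=
  source_detachment_general 𝒜 hInternal R W hR0 hgen δ hLeib hδR e₀ he₀R hidem hcentral he₀W hRe₀
end
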